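/- Let p, q, N be real numbers with 0 < q < 2 < p and 2 < N < 2(p−q)/(p−2), and set α := (N−q)/(2−q) − p/(p−2). Let (X,d) be a metric space, μ a Borel measure on X, x₀ ∈ X and A ∈ (0,∞), and suppose lim_{ρ→0⁺} μ(B_ρ(x₀))/(ω_N ρ^N) = A. Then liminf_{λ→0⁺} λ^{−α} ∫_X (λ + d(x₀,x)^{2−q})^{p/(2−p)} d(x₀,x)^{−q} dμ(x) ≥ A ω_N N ∫₀^∞ (1 + y^{2−q})^{p/(2−p)} y^{N−q−1} dy. -/

import Mathlib

/-!
The integrand is `g_λ(d(x₀, x))` for the decreasing profile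
`g_λ(r) = (λ + r^{2-q})^{p/(2-p)} r^{-q}`. Whenever `μ(B_ρ(x₀)) ≥ C ρ^N` for `ρ ≤ R`, comparing
the layer-cake formulas level by level gives `∫_{B_R} g_λ(d) dμ ≥ C ∫_0^R g_λ(s) N s^{N-1} ds`:
each superlevel set of `g_λ ∘ d` contains a punctured ball whose radius bounds the corresponding
superlevel set of `g_λ` in `(0, R)`. With `R = λ^{1/(2-q)} T` and `C < A ω_N`, the substitution
`s = λ^{1/(2-q)} y` turns the right-hand side into
`λ^α C ∫_0^T N (1 + y^{2-q})^{p/(2-p)} y^{N-q-1} dy`.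
Letting `λ → 0⁺`, then `T → ∞` and `C → A ω_N`, gives the bound. The density hypothesis also
forces `μ {x₀} = 0`, so the centre, where `g_λ` is not monotone as a real function, is negligible.
-/

open MeasureTheory Set Filter

/-- `ω_N = π^{N/2} / Γ(N/2 + 1)`, the volume of the unit ball in dimension `N`. -/
noncomputable def omegaN (N : ℝ) : ℝ := Real.pi ^ (N / 2) / Real.Gamma (N / 2 + 1)

open Topology
open scoped ENNReal

theorem omegaN_pos {N : ℝ} (hN : -2 < N) : 0 < omegaN N :=
  div_pos (Real.rpow_pos_of_pos Real.pi_pos _) (Real.Gamma_pos_of_pos (by linarith))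

theorem ENNReal.ofReal_rpow_le {r : ℝ} (hr : 0 ≤ r) (s : ℝ) :
    ENNReal.ofReal (r ^ s) ≤ ENNReal.ofReal r ^ s := by
  rcases hr.eq_or_lt with rfl | hr
  · rcases eq_or_ne s 0 with rfl | hs
    · simp
    · simp [Real.zero_rpow hs]
  · exact (ENNReal.ofReal_rpow_of_pos hr).ge

theorem ofReal_integral_le_lintegral_ofReal {α : Type*} [MeasurableSpace α] {μ : Measure α}
    {f : α → ℝ} (hf : 0 ≤ᵐ[μ] f) :
    ENNReal.ofReal (∫ x, f x ∂μ) ≤ ∫⁻ x, ENNReal.ofReal (f x) ∂μ := by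
  by_cases hi : Integrable f μ
  · exact (ofReal_integral_eq_lintegral_ofReal hi hf).le
  · simp [integral_undef hi]

section Density

variable {m : ℝ → ℝ≥0∞} {ω N A C : ℝ}

theorem eventually_ofReal_mul_rpow_le (hω : 0 < ω) (hC : C < A * ω)
    (hlim : Tendsto (fun ρ => (m ρ).toReal / (ω * ρ ^ N)) (𝓝[>] 0) (𝓝 A)) :
    ∀ᶠ ρ in 𝓝[>] 0, ENNReal.ofReal C * ENNReal.ofReal (ρ ^ N) ≤ m ρ := by
  filter_upwards [hlim.eventually (lt_mem_nhds ((div_lt_iff₀ hω).2 hC)),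
    self_mem_nhdsWithin] with ρ hρ (hρ0 : 0 < ρ)
  have hD : 0 < ω * ρ ^ N := mul_pos hω (Real.rpow_pos_of_pos hρ0 N)
  rw [← ENNReal.ofReal_mul' (Real.rpow_nonneg hρ0.le N)]
  refine ENNReal.ofReal_le_of_le_toReal ?_
  have hCρ : C / ω * (ω * ρ ^ N) = C * ρ ^ N := by field_simp
  exact hCρ ▸ ((lt_div_iff₀ hD).1 hρ).le

theorem eventually_le_ofReal_mul_rpow (hω : 0 < ω) (hA : 0 < A) (hC : A * ω < C)
    (hlim : Tendsto (fun ρ => (m ρ).toReal / (ω * ρ ^ N)) (𝓝[>] 0) (𝓝 A)) :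
    ∀ᶠ ρ in 𝓝[>] 0, m ρ ≤ ENNReal.ofReal (C * ρ ^ N) := by
  filter_upwards [hlim.eventually (Ioo_mem_nhds hA ((lt_div_iff₀ hω).2 hC)),
    self_mem_nhdsWithin] with ρ ⟨hpos, hlt⟩ (hρ0 : 0 < ρ)
  have hD : 0 < ω * ρ ^ N := mul_pos hω (Real.rpow_pos_of_pos hρ0 N)
  have hfin : m ρ ≠ ⊤ := fun htop => by simp [htop] at hpos
  refine (ENNReal.le_ofReal_iff_toReal_le hfin
    (mul_pos (by nlinarith [mul_pos hA hω]) (Real.rpow_pos_of_pos hρ0 N)).le).2 ?_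
  have hCρ : C / ω * (ω * ρ ^ N) = C * ρ ^ N := by field_simp
  exact hCρ ▸ ((div_lt_iff₀ hD).1 hlt).le

end Density

theorem measure_singleton_eq_zero_of_tendsto {X : Type*} [PseudoMetricSpace X]
    [MeasurableSpace X] {μ : Measure X} {x₀ : X} {ω N A : ℝ} (hω : 0 < ω) (hN : 0 < N)
    (hA : 0 < A)
    (hlim : Tendsto (fun ρ => (μ (Metric.ball x₀ ρ)).toReal / (ω * ρ ^ N)) (𝓝[>] 0) (𝓝 A)) :
    μ {x₀} = 0 := by
  have hbound : ∀ᶠ ρ in 𝓝[>] 0, μ {x₀} ≤ ENNReal.ofReal (2 * A * ω * ρ ^ N) := by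
    filter_upwards [eventually_le_ofReal_mul_rpow hω hA
      (by nlinarith [mul_pos hA hω] : A * ω < 2 * A * ω) hlim, self_mem_nhdsWithin]
      with ρ hρ (hρ0 : 0 < ρ)
    exact (measure_mono (by simpa using hρ0)).trans hρ
  have htend : Tendsto (fun ρ : ℝ => ENNReal.ofReal (2 * A * ω * ρ ^ N)) (𝓝[>] 0) (𝓝 0) := by
    have := (ENNReal.tendsto_ofReal ((Real.continuousAt_rpow_const 0 N
      (Or.inr hN.le)).tendsto.const_mul (2 * A * ω))).mono_left
      (nhdsWithin_le_nhds (s := Ioi 0))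
    simpa [Real.zero_rpow hN.ne'] using this
  exact le_antisymm (ge_of_tendsto htend hbound) bot_le

theorem lintegral_ofReal_le_of_meas_lt_le {α : Type*} [MeasurableSpace α] {μ ν : Measure α}
    {f : α → ℝ} (hμ : 0 ≤ᵐ[μ] f) (hν : 0 ≤ᵐ[ν] f) (hfμ : AEMeasurable f μ)
    (hfν : AEMeasurable f ν) (h : ∀ t > 0, ν {a | t < f a} ≤ μ {a | t < f a}) :
    ∫⁻ a, ENNReal.ofReal (f a) ∂ν ≤ ∫⁻ a, ENNReal.ofReal (f a) ∂μ := by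
  rw [lintegral_eq_lintegral_meas_lt ν hν hfν, lintegral_eq_lintegral_meas_lt μ hμ hfμ]
  exact setLIntegral_mono' measurableSet_Ioi h

theorem lintegral_Ioc_ofReal_mul_rpow_sub_one {N m : ℝ} (hN : 0 < N) (hm : 0 ≤ m) :
    ∫⁻ s in Ioc 0 m, ENNReal.ofReal (N * s ^ (N - 1)) = ENNReal.ofReal (m ^ N) := by
  have hint : IntervalIntegrable (fun s : ℝ => N * s ^ (N - 1)) volume 0 m :=
    (intervalIntegral.intervalIntegrable_rpow' (by linarith)).const_mul N
  rw [← ofReal_integral_eq_lintegral_ofReal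
    ((intervalIntegrable_iff_integrableOn_Ioc_of_le hm).1 hint)]
  · rw [← intervalIntegral.integral_of_le hm, intervalIntegral.integral_const_mul,
      integral_rpow (Or.inl (by linarith)), sub_add_cancel, Real.zero_rpow hN.ne', sub_zero,
      mul_div_cancel₀ _ hN.ne']
  · filter_upwards [ae_restrict_mem measurableSet_Ioc] with s hs
    exact mul_nonneg hN.le (Real.rpow_nonneg hs.1.le _)

theorem AntitoneOn.exists_Ioo_subset_superlevel_subset_Ioc {g : ℝ → ℝ} {R : ℝ}
    (hg : AntitoneOn g (Ioo 0 R)) {t : ℝ} (hne : ({s | t < g s} ∩ Ioo 0 R).Nonempty) :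
    ∃ m ∈ Ioc 0 R, Ioo 0 m ⊆ {s | t < g s} ∩ Ioo 0 R ∧ {s | t < g s} ∩ Ioo 0 R ⊆ Ioc 0 m := by
  have hbdd : BddAbove ({s | t < g s} ∩ Ioo 0 R) := bddAbove_Ioo.mono inter_subset_right
  obtain ⟨s₀, hs₀⟩ := hne
  refine ⟨sSup ({s | t < g s} ∩ Ioo 0 R), ⟨hs₀.2.1.trans_le (le_csSup hbdd hs₀),
    csSup_le ⟨s₀, hs₀⟩ fun s hs => hs.2.2.le⟩, fun s hs => ?_,
    fun s hs => ⟨hs.2.1, le_csSup hbdd hs⟩⟩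
  obtain ⟨s', hs', hss'⟩ := exists_lt_of_lt_csSup ⟨s₀, hs₀⟩ hs.2
  have hsR : s ∈ Ioo 0 R := ⟨hs.1, hss'.trans hs'.2.2⟩
  exact ⟨hs'.1.trans_le (hg hsR hs'.2 hss'.le), hsR⟩

section Radial

variable {X : Type*} [MetricSpace X] [MeasurableSpace X]
  {μ : Measure X} {x₀ : X} {N R : ℝ} {C : ℝ≥0∞} {g : ℝ → ℝ}

theorem mul_lintegral_superlevel_le_measure (hx₀ : μ {x₀} = 0) (hN : 0 < N)
    (hball : ∀ ρ ∈ Ioc 0 R, C * ENNReal.ofReal (ρ ^ N) ≤ μ (Metric.ball x₀ ρ))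
    (hg : AntitoneOn g (Ioo 0 R)) (t : ℝ) :
    C * ∫⁻ s in {s | t < g s} ∩ Ioo 0 R, ENNReal.ofReal (N * s ^ (N - 1)) ≤
      μ ({x | t < g (dist x₀ x)} ∩ (Metric.ball x₀ R \ {x₀})) := by
  rcases ({s | t < g s} ∩ Ioo 0 R).eq_empty_or_nonempty with hS | hS
  · simp [hS]
  obtain ⟨m, ⟨hm0, hmR⟩, hIoo, hIoc⟩ := hg.exists_Ioo_subset_superlevel_subset_Ioc hS
  have hsub :
      Metric.ball x₀ m \ {x₀} ⊆ {x | t < g (dist x₀ x)} ∩ (Metric.ball x₀ R \ {x₀}) := by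
    rintro x ⟨hxm, hx⟩
    have hd : dist x₀ x ∈ Ioo 0 m := ⟨dist_pos.2 (Ne.symm hx), by rwa [dist_comm]⟩
    exact ⟨(hIoo hd).1, Metric.ball_subset_ball hmR hxm, hx⟩
  calc C * ∫⁻ s in {s | t < g s} ∩ Ioo 0 R, ENNReal.ofReal (N * s ^ (N - 1))
      ≤ C * ∫⁻ s in Ioc 0 m, ENNReal.ofReal (N * s ^ (N - 1)) := by gcongr
    _ = C * ENNReal.ofReal (m ^ N) := by rw [lintegral_Ioc_ofReal_mul_rpow_sub_one hN hm0.le]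
    _ ≤ μ (Metric.ball x₀ m) := hball m ⟨hm0, hmR⟩
    _ = μ (Metric.ball x₀ m \ {x₀}) := (measure_sdiff_null hx₀).symm
    _ ≤ _ := measure_mono hsub

theorem mul_lintegral_Ioo_le_setLIntegral_ball [OpensMeasurableSpace X] (hx₀ : μ {x₀} = 0)
    (hN : 0 < N)
    (hball : ∀ ρ ∈ Ioc 0 R, C * ENNReal.ofReal (ρ ^ N) ≤ μ (Metric.ball x₀ ρ))
    (hgm : Measurable g) (hg0 : ∀ s ∈ Ioo 0 R, 0 ≤ g s) (hg : AntitoneOn g (Ioo 0 R)) :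
    C * ∫⁻ s in Ioo 0 R, ENNReal.ofReal (N * s ^ (N - 1) * g s) ≤
      ∫⁻ x in Metric.ball x₀ R, ENNReal.ofReal (g (dist x₀ x)) ∂μ := by
  set U := Metric.ball x₀ R \ {x₀}
  have hU : MeasurableSet U := Metric.isOpen_ball.measurableSet.diff (measurableSet_singleton x₀)
  have hdist : Measurable (dist x₀) := (continuous_const.dist continuous_id).measurable
  -- Compare the image of `μ` on the punctured ball under `dist x₀` with `C • d(s ^ N)` on `(0, R)`.
  set ν := C • (volume.restrict (Ioo 0 R)).withDensity fun s => ENNReal.ofReal (N * s ^ (N - 1))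
  set μ' := (μ.restrict U).map (dist x₀)
  have hν : ∀ᵐ s ∂ν, s ∈ Ioo 0 R := Measure.ae_smul_measure
    ((ae_restrict_mem measurableSet_Ioo).filter_mono
      (withDensity_absolutelyContinuous _ _).ae_le) C
  have hμ' : ∀ᵐ s ∂μ', s ∈ Ioo 0 R := (ae_map_iff hdist.aemeasurable measurableSet_Ioo).2
    (ae_restrict_of_forall_mem hU fun x hx =>
      ⟨dist_pos.2 (Ne.symm hx.2), by simpa [dist_comm] using hx.1⟩)
  have hLHS : C * ∫⁻ s in Ioo 0 R, ENNReal.ofReal (N * s ^ (N - 1) * g s) =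
      ∫⁻ s, ENNReal.ofReal (g s) ∂ν := by
    rw [lintegral_smul_measure, lintegral_withDensity_eq_lintegral_mul _ (by fun_prop)
      hgm.ennreal_ofReal]
    congr 1
    refine setLIntegral_congr_fun measurableSet_Ioo fun s hs => ?_
    rw [Pi.mul_apply, ENNReal.ofReal_mul (mul_nonneg hN.le (Real.rpow_nonneg hs.1.le _))]
  have hRHS : ∫⁻ x in Metric.ball x₀ R, ENNReal.ofReal (g (dist x₀ x)) ∂μ =
      ∫⁻ s, ENNReal.ofReal (g s) ∂μ' := by
    rw [← setLIntegral_congr (sdiff_null_ae_eq_self hx₀), lintegral_map hgm.ennreal_ofReal hdist]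
  rw [hLHS, hRHS]
  refine lintegral_ofReal_le_of_meas_lt_le (hμ'.mono hg0) (hν.mono hg0) hgm.aemeasurable
    hgm.aemeasurable fun t _ => ?_
  have hS : MeasurableSet {s | t < g s} := measurableSet_lt measurable_const hgm
  rw [Measure.smul_apply, withDensity_apply _ hS, Measure.restrict_restrict hS,
    Measure.map_apply hdist hS, Measure.restrict_apply (hdist hS)]
  exact mul_lintegral_superlevel_le_measure hx₀ hN hball hg t

end Radial

/-- Real `rpow` makes `cknWeight p q lam 0 = 0`, not `∞`. -/
noncomputable def cknWeight (p q lam r : ℝ) : ℝ := (lam + r ^ (2 - q)) ^ (p / (2 - p)) * r ^ (-q)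

section CknWeight

variable {p q lam : ℝ}

theorem measurable_cknWeight : Measurable (cknWeight p q lam) := by
  unfold cknWeight
  fun_prop

theorem cknWeight_nonneg (hlam : 0 ≤ lam) {r : ℝ} (hr : 0 ≤ r) : 0 ≤ cknWeight p q lam r :=
  mul_nonneg (Real.rpow_nonneg (by positivity) _) (Real.rpow_nonneg hr _)

theorem antitoneOn_cknWeight (hq : 0 ≤ q) (hq2 : q ≤ 2) (hp : 2 ≤ p) (hlam : 0 ≤ lam) :
    AntitoneOn (cknWeight p q lam) (Ioi 0) := by
  intro a (ha : 0 < a) b (hb : 0 < b) hab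
  have hexp : p / (2 - p) ≤ 0 := div_nonpos_of_nonneg_of_nonpos (by linarith) (by linarith)
  exact mul_le_mul
    (Real.rpow_le_rpow_of_nonpos (by positivity) (by gcongr) hexp)
    (Real.rpow_le_rpow_of_nonpos ha hab (by linarith))
    (Real.rpow_nonneg hb.le _) (Real.rpow_nonneg (by positivity) _)

theorem ofReal_cknWeight_le (hlam : 0 ≤ lam) {r : ℝ} (hr : 0 ≤ r) :
    ENNReal.ofReal (cknWeight p q lam r) ≤
      ENNReal.ofReal ((lam + r ^ (2 - q)) ^ (p / (2 - p))) * ENNReal.ofReal r ^ (-q) := by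
  rw [cknWeight, ENNReal.ofReal_mul (Real.rpow_nonneg (by positivity) _)]
  gcongr
  exact ENNReal.ofReal_rpow_le hr _

theorem cknWeight_rpow_mul {c y : ℝ} (hc : 0 < c) (hy : 0 < y) :
    cknWeight p q (c ^ (2 - q)) (c * y) =
      c ^ ((2 - q) * (p / (2 - p)) - q) * cknWeight p q 1 y := by
  have hsum : c ^ (2 - q) + (c * y) ^ (2 - q) = c ^ (2 - q) * (1 + y ^ (2 - q)) := by
    rw [Real.mul_rpow hc.le hy.le]
    ring
  have hexp : c ^ ((2 - q) * (p / (2 - p)) - q) = c ^ ((2 - q) * (p / (2 - p))) * c ^ (-q) := by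
    rw [← Real.rpow_add hc, sub_eq_add_neg]
  rw [cknWeight, cknWeight, hsum, Real.mul_rpow (by positivity) (by positivity),
    Real.mul_rpow hc.le hy.le, ← Real.rpow_mul hc.le, hexp]
  ring

end CknWeight

theorem lintegral_Ioo_cknWeight_rpow_mul {p q N c T : ℝ} (hc : 0 < c) :
    ∫⁻ s in Ioo 0 (c * T), ENNReal.ofReal (N * s ^ (N - 1) * cknWeight p q (c ^ (2 - q)) s) =
      ENNReal.ofReal (c ^ (N - q + (2 - q) * (p / (2 - p)))) *
        ∫⁻ y in Ioo 0 T,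
          ENNReal.ofReal (N * ((1 + y ^ (2 - q)) ^ (p / (2 - p)) * y ^ (N - q - 1))) := by
  have himage : (c * ·) '' Ioo 0 T = Ioo 0 (c * T) := by rw [image_mul_left_Ioo hc, mul_zero]
  rw [← himage, lintegral_image_eq_lintegral_abs_deriv_mul
    measurableSet_Ioo (fun y _ => ((hasDerivAt_id' y).const_mul c).hasDerivWithinAt)
    (mul_right_injective₀ hc.ne').injOn, ← lintegral_const_mul' _ _ ENNReal.ofReal_ne_top]
  refine setLIntegral_congr_fun measurableSet_Ioo fun y hy => ?_
  have hexp : c ^ (N - q + (2 - q) * (p / (2 - p))) =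
      c * c ^ (N - 1) * c ^ ((2 - q) * (p / (2 - p)) - q) := by
    nth_rewrite 2 [← Real.rpow_one c]
    rw [← Real.rpow_add hc, ← Real.rpow_add hc]
    congr 1
    ring
  have hy' : y ^ (N - q - 1) = y ^ (N - 1) * y ^ (-q) := by
    rw [← Real.rpow_add hy.1]
    ring_nf
  rw [mul_one, abs_of_pos hc, ← ENNReal.ofReal_mul hc.le, ← ENNReal.ofReal_mul (by positivity),
    cknWeight_rpow_mul hc hy.1, Real.mul_rpow hc.le hy.1.le, hexp, cknWeight, hy']
  congr 1
  ring

theorem ofReal_mul_setLIntegral_Ioi_le {G : ℝ → ℝ≥0∞} {a : ℝ} {L : ℝ≥0∞} (ha : 0 < a)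
    (h : ∀ C < a, ∀ T, ENNReal.ofReal C * ∫⁻ y in Ioo 0 T, G y ≤ L) :
    ENNReal.ofReal a * ∫⁻ y in Ioi 0, G y ≤ L := by
  have hT : Tendsto (fun T => ∫⁻ y in Ioo 0 T, G y) atTop (𝓝 (∫⁻ y in Ioi 0, G y)) := by
    simpa only [Function.comp_def, withDensity_apply', iUnion_Ioo_right] using
      tendsto_measure_iUnion_atTop (μ := volume.withDensity G)
        (fun _ _ h => Ioo_subset_Ioo_right h : Monotone fun T : ℝ => Ioo 0 T)
  have hC : ∀ C < a, ENNReal.ofReal C * ∫⁻ y in Ioi 0, G y ≤ L := fun C hC =>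
    le_of_tendsto' (ENNReal.Tendsto.const_mul hT (Or.inr ENNReal.ofReal_ne_top)) (h C hC)
  refine le_of_tendsto (ENNReal.Tendsto.mul_const
    ((ENNReal.continuous_ofReal.tendsto a).mono_left (nhdsWithin_le_nhds (s := Iio a)))
    (Or.inl (ENNReal.ofReal_pos.2 ha).ne')) ?_
  exact eventually_nhdsWithin_of_forall hC

theorem tendsto_rpow_mul_nhdsGT_zero {r : ℝ} (hr : 0 < r) (T : ℝ) :
    Tendsto (fun x : ℝ => x ^ r * T) (𝓝[>] 0) (𝓝 0) := by
  have := ((Real.continuousAt_rpow_const 0 r (Or.inr hr.le)).tendsto.mul_const T).mono_left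
    (nhdsWithin_le_nhds (s := Ioi 0))
  simpa [Real.zero_rpow hr.ne'] using this

theorem ckn_exponent_eq {p q N : ℝ} (hq2 : q ≠ 2) :
    (2 - q) * ((N - q) / (2 - q) - p / (p - 2)) = N - q + (2 - q) * (p / (2 - p)) := by
  have hq2' : 2 - q ≠ 0 := sub_ne_zero.2 hq2.symm
  rw [← neg_sub p 2, div_neg]
  field_simp
  ring

theorem eventually_ofReal_mul_lintegral_le_ckn {p q N α : ℝ} (hq : 0 ≤ q) (hq2 : q < 2)
    (hp : 2 ≤ p) (hN : 0 < N) (hα : α = (N - q) / (2 - q) - p / (p - 2))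
    {X : Type*} [MetricSpace X] [MeasurableSpace X] [OpensMeasurableSpace X]
    {μ : Measure X} {x₀ : X} (hx₀ : μ {x₀} = 0) {C : ℝ}
    (hball : ∀ᶠ ρ in 𝓝[>] 0, ENNReal.ofReal C * ENNReal.ofReal (ρ ^ N) ≤ μ (Metric.ball x₀ ρ))
    (T : ℝ) :
    ∀ᶠ lam in 𝓝[>] 0,
      ENNReal.ofReal C * ∫⁻ y in Ioo 0 T,
          ENNReal.ofReal (N * ((1 + y ^ (2 - q)) ^ (p / (2 - p)) * y ^ (N - q - 1))) ≤
        ENNReal.ofReal (lam ^ (-α)) *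
          ∫⁻ x, ENNReal.ofReal ((lam + dist x₀ x ^ (2 - q)) ^ (p / (2 - p))) *
            ENNReal.ofReal (dist x₀ x) ^ (-q) ∂μ := by
  obtain ⟨ρ₀, hρ₀, hρ⟩ := mem_nhdsGT_iff_exists_Ioo_subset.1 hball
  filter_upwards [(tendsto_rpow_mul_nhdsGT_zero (inv_pos.2 (sub_pos.2 hq2)) T).eventually_lt_const
    hρ₀, self_mem_nhdsWithin] with lam hlamR (hlam : 0 < lam)
  -- At the length scale `c = lam ^ (1 / (2 - q))`, `lam + r ^ (2 - q)` becomes homogeneous in `r`.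
  set c := lam ^ (2 - q)⁻¹
  have hc : 0 < c := Real.rpow_pos_of_pos hlam _
  have hcq : c ^ (2 - q) = lam := Real.rpow_inv_rpow hlam.le (sub_ne_zero.2 hq2.ne')
  have hcancel : ENNReal.ofReal (lam ^ (-α)) *
      ENNReal.ofReal (c ^ (N - q + (2 - q) * (p / (2 - p)))) = 1 := by
    rw [← ENNReal.ofReal_mul (by positivity), ← hcq, ← Real.rpow_mul hc.le, ← Real.rpow_add hc,
      hα, ← ckn_exponent_eq hq2.ne, mul_neg, neg_add_cancel, Real.rpow_zero, ENNReal.ofReal_one]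
  calc ENNReal.ofReal C * ∫⁻ y in Ioo 0 T,
          ENNReal.ofReal (N * ((1 + y ^ (2 - q)) ^ (p / (2 - p)) * y ^ (N - q - 1)))
      = ENNReal.ofReal (lam ^ (-α)) * (ENNReal.ofReal C * ∫⁻ s in Ioo 0 (c * T),
          ENNReal.ofReal (N * s ^ (N - 1) * cknWeight p q (c ^ (2 - q)) s)) := by
        rw [lintegral_Ioo_cknWeight_rpow_mul hc, mul_left_comm (ENNReal.ofReal C), ← mul_assoc,
          hcancel, one_mul]
    _ ≤ ENNReal.ofReal (lam ^ (-α)) *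
          ∫⁻ x in Metric.ball x₀ (c * T), ENNReal.ofReal (cknWeight p q lam (dist x₀ x)) ∂μ := by
        rw [hcq]
        gcongr
        exact mul_lintegral_Ioo_le_setLIntegral_ball hx₀ hN
          (fun ρ hρ' => hρ ⟨hρ'.1, hρ'.2.trans_lt hlamR⟩) measurable_cknWeight
          (fun s hs => cknWeight_nonneg hlam.le hs.1.le)
          ((antitoneOn_cknWeight hq hq2.le hp hlam.le).mono Ioo_subset_Ioi_self)
    _ ≤ _ := mul_le_mul_right ((setLIntegral_le_lintegral _ _).trans
          (lintegral_mono fun x => ofReal_cknWeight_le hlam.le dist_nonneg)) _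

theorem ckn_liminf_ge_general (p q N α : ℝ)
    (hq : 0 < q) (hq2 : q < 2) (hp : 2 < p)
    (hN1 : 2 < N)
    (hα : α = (N - q) / (2 - q) - p / (p - 2))
    {X : Type*} [MetricSpace X] [MeasurableSpace X] [BorelSpace X]
    (μ : Measure X) (x₀ : X) (A : ℝ) (hA : 0 < A)
    (hlim : Tendsto (fun ρ => (μ (Metric.ball x₀ ρ)).toReal / (omegaN N * ρ ^ N))
      (nhdsWithin 0 (Ioi 0)) (nhds A)) :
    ENNReal.ofReal (A * omegaN N * N *
        ∫ y in Ioi (0:ℝ), (1 + y ^ (2 - q)) ^ (p / (2 - p)) * y ^ (N - q - 1)) ≤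
      liminf (fun lam : ℝ =>
          ENNReal.ofReal (lam ^ (-α)) *
            ∫⁻ x, ENNReal.ofReal ((lam + dist x₀ x ^ (2 - q)) ^ (p / (2 - p))) *
              ENNReal.ofReal (dist x₀ x) ^ (-q) ∂μ)
        (nhdsWithin 0 (Ioi 0)) := by
  have hN : 0 < N := by linarith
  have hω : 0 < omegaN N := omegaN_pos (by linarith)
  have hx₀ : μ {x₀} = 0 := measure_singleton_eq_zero_of_tendsto hω hN hA hlim
  have hf : 0 ≤ᵐ[volume.restrict (Ioi 0)]
      fun y : ℝ => N * ((1 + y ^ (2 - q)) ^ (p / (2 - p)) * y ^ (N - q - 1)) := by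
    filter_upwards [ae_restrict_mem measurableSet_Ioi] with y (hy : 0 < y)
    positivity
  calc _ = ENNReal.ofReal (A * omegaN N) * ENNReal.ofReal
          (∫ y in Ioi 0, N * ((1 + y ^ (2 - q)) ^ (p / (2 - p)) * y ^ (N - q - 1))) := by
        rw [mul_assoc, ← integral_const_mul, ENNReal.ofReal_mul (mul_pos hA hω).le]
    _ ≤ ENNReal.ofReal (A * omegaN N) * ∫⁻ y in Ioi 0,
          ENNReal.ofReal (N * ((1 + y ^ (2 - q)) ^ (p / (2 - p)) * y ^ (N - q - 1))) :=
        mul_le_mul_right (ofReal_integral_le_lintegral_ofReal hf) _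
    _ ≤ _ := ofReal_mul_setLIntegral_Ioi_le (mul_pos hA hω) fun C hC T =>
        le_liminf_of_le (by isBoundedDefault) (eventually_ofReal_mul_lintegral_le_ckn hq.le hq2
          hp.le hN hα hx₀ (eventually_ofReal_mul_rpow_le hω hC hlim) T)

/-- If the small-ball density of `μ` at `x₀` tends to `A`, then
`liminf_{λ → 0⁺} λ^{-α} ∫_X (λ + d^{2-q})^{p/(2-p)} d^{-q} dμ ≥
  A ω_N N ∫₀^∞ (1 + y^{2-q})^{p/(2-p)} y^{N-q-1} dy`. -/
theorem ckn_liminf_ge (p q N α : ℝ)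
    (hq : 0 < q) (hq2 : q < 2) (hp : 2 < p)
    (hN1 : 2 < N) (hN2 : N < 2 * (p - q) / (p - 2))
    (hα : α = (N - q) / (2 - q) - p / (p - 2))
    {X : Type*} [MetricSpace X] [MeasurableSpace X] [BorelSpace X]
    (μ : Measure X) (x₀ : X) (A : ℝ) (hA : 0 < A)
    (hlim : Tendsto (fun ρ => (μ (Metric.ball x₀ ρ)).toReal / (omegaN N * ρ ^ N))
      (nhdsWithin 0 (Ioi 0)) (nhds A)) :
    ENNReal.ofReal (A * omegaN N * N *
        ∫ y in Ioi (0:ℝ), (1 + y ^ (2 - q)) ^ (p / (2 - p)) * y ^ (N - q - 1)) ≤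
      liminf (fun lam : ℝ =>
          ENNReal.ofReal (lam ^ (-α)) *
            ∫⁻ x, ENNReal.ofReal ((lam + dist x₀ x ^ (2 - q)) ^ (p / (2 - p))) *
              ENNReal.ofReal (dist x₀ x) ^ (-q) ∂μ)
        (nhdsWithin 0 (Ioi 0)) :=
  ckn_liminf_ge_general p q N α hq hq2 hp hN1 hα μ x₀ A hA hlim
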